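/- Let W₁ and W₂ be regularized wavelet sets with wavelet induced isomorphisms h₁ = h̃_{W₁} and h₂ = h̃_{W₂}, and let ω' := {x ∈ [0,1) : h₁^{-1}(x) ≠ h₂^{-1}(x)}. Then μ(W₁ △ W₂) = 4π μ(ω'), where △ denotes symmetric difference. -/

import Mathlib

open MeasureTheory Set Real Filter
open scoped symmDiff Classical

noncomputable section

/-- The Littlewood–Paley set `E = [-2π,-π) ∪ [π,2π)`. -/
def E : Set ℝ := Ico (-(2*π)) (-π) ∪ Ico π (2*π)

/-- `tau x = x + 2jπ`, where `j` is the unique integer with `x + 2jπ ∈ E`. -/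
def tau (x : ℝ) : ℝ :=
  if x - 2*π*(⌊x/(2*π)⌋ : ℝ) < π then x - 2*π*(⌊x/(2*π)⌋ : ℝ) - 2*π
  else x - 2*π*(⌊x/(2*π)⌋ : ℝ)

/-- `delta x = 2^k x`, where (for `x ≠ 0`) `k` is the unique integer with `2^k x ∈ E`. -/
def delta (x : ℝ) : ℝ :=
  if 0 < x then (2:ℝ)^(⌈Real.logb 2 (π/x)⌉) * x
  else (2:ℝ)^(⌊Real.logb 2 (2*π/(-x))⌋) * x

/-- The map `ξ : E → [0,1)`. -/
def xiMap (x : ℝ) : ℝ := if x < 0 then x/(2*π) + 1 else x/(2*π)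

/-- The inverse `ξ⁻¹ : [0,1) → E`. -/
def xiInv (y : ℝ) : ℝ := if y < 1/2 then 2*π*(y-1) else 2*π*y

/-- The translates `{W + 2kπ}_{k ∈ ℤ}` form a partition of `ℝ`. -/
def TransPartition (W : Set ℝ) : Prop :=
  (⋃ k : ℤ, (fun x : ℝ => x + 2*π*(k:ℝ)) '' W) = univ ∧
  Pairwise fun k l : ℤ =>
    Disjoint ((fun x : ℝ => x + 2*π*(k:ℝ)) '' W) ((fun x : ℝ => x + 2*π*(l:ℝ)) '' W)

/-- The dilates `{2^k W}_{k ∈ ℤ}` form a partition of `ℝ \ {0}`. -/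
def DilPartition (W : Set ℝ) : Prop :=
  (⋃ k : ℤ, (fun x : ℝ => (2:ℝ)^k * x) '' W) = {(0:ℝ)}ᶜ ∧
  Pairwise fun k l : ℤ =>
    Disjoint ((fun x : ℝ => (2:ℝ)^k * x) '' W) ((fun x : ℝ => (2:ℝ)^l * x) '' W)

/-- A regularized wavelet set. -/
def IsRegularizedWaveletSet (W : Set ℝ) : Prop :=
  MeasurableSet W ∧ TransPartition W ∧ DilPartition W

/-- The wavelet induced isomorphism `h̃_W = ξ ∘ τ|_W ∘ (δ|_W)⁻¹ ∘ ξ⁻¹` of `[0,1)`. -/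
def hIso (W : Set ℝ) : ℝ → ℝ :=
  fun t => xiMap (tau (Function.invFunOn delta W (xiInv t)))

/-- The class of wavelet induced maps of `[0,1)` (Proposition 2.3 (i)-(ii)). -/
def IsWaveletInduced (h : ℝ → ℝ) : Prop :=
  Set.BijOn h (Ico (0:ℝ) 1) (Ico (0:ℝ) 1) ∧
  Measurable ((Ico (0:ℝ) 1).restrict h) ∧
  ∃ A B : ℤ → Set ℝ,
    (∀ k, MeasurableSet (A k)) ∧ (∀ k, MeasurableSet (B k)) ∧
    (⋃ k, A k) = Ico (1/2 : ℝ) 1 ∧ Pairwise (Function.onFun Disjoint A) ∧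
    (⋃ k, B k) = Ico (0:ℝ) (1/2) ∧ Pairwise (Function.onFun Disjoint B) ∧
    (∀ k, ∀ x ∈ A k, h x = Int.fract ((2:ℝ)^k * x)) ∧
    (∀ k, ∀ x ∈ B k, h x = Int.fract ((2:ℝ)^k * (x - 1)))

/-- The class `WI₁`. -/
def MemWI1 (f : ℝ → ℝ) : Prop :=
  ∃ A B : ℕ → Set ℝ,
    (∀ k, MeasurableSet (A k)) ∧ (∀ k, MeasurableSet (B k)) ∧
    (⋃ k, A k) = Ico (1/2 : ℝ) 1 ∧ Pairwise (Function.onFun Disjoint A) ∧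
    (⋃ k, B k) = Ico (0:ℝ) (1/2) ∧ Pairwise (Function.onFun Disjoint B) ∧
    (∀ k, ∀ x ∈ A k, f x = x / 2^(k+1)) ∧
    (∀ k, ∀ x ∈ B k, f x = (x - 1) / 2^(k+1) + 1)

/-- The class `WI₂`. -/
def MemWI2 (g : ℝ → ℝ) : Prop :=
  Measurable ((Ico (0:ℝ) 1).restrict g) ∧
  Set.MapsTo g (Ico (0:ℝ) 1) (Ico (0:ℝ) 1) ∧
  Set.InjOn g (Ico (0:ℝ) 1) ∧
  ∀ x ∈ Ico (0:ℝ) 1, ∃ k l : ℕ, g x = (x + l) / 2^k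

/-- The Schröder–Cantor–Bernstein map `u ⋄ v` for injections between arbitrary types. -/
def scb {α β : Type*} (u : α → β) (v : β → α) : α → β :=
  fun x =>
    if x ∈ ⋃ k : ℕ, (v ∘ u)^[k] '' (Set.range v)ᶜ then u x
    else if h2 : x ∈ Set.range v then Classical.choose h2
    else u x

/-- The Schröder–Cantor–Bernstein map `u ⋄ v` for maps of `[0,1)`. -/
def scbOn (u v : ℝ → ℝ) : ℝ → ℝ :=
  fun x =>
    if x ∈ ⋃ k : ℕ, (v ∘ u)^[k] '' (Ico (0:ℝ) 1 \ v '' (Ico (0:ℝ) 1)) then u x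
    else Function.invFunOn v (Ico (0:ℝ) 1) x

/-- The metric `d` on wavelet sets. -/
def dws (W₁ W₂ : Set ℝ) : ℝ :=
  Real.sqrt (volume (W₁ ∆ W₂)).toReal + Real.sqrt (∫ x in W₁ ∆ W₂, |x|⁻¹)

/-- The measure `ν` on `[0,1)` with density `(1-x)⁻¹` on `[0,1/2)` and `x⁻¹` on `[1/2,1)`. -/
def nuMeasure : Measure ℝ :=
  volume.withDensity (fun x =>
    ENNReal.ofReal (if x ∈ Ico (0:ℝ) (1/2) then (1-x)⁻¹
      else if x ∈ Ico (1/2:ℝ) 1 then x⁻¹ else 0))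


/-! With `turns x = fract (x / 2π)` we have `ξ ∘ τ = turns`. For a regularized wavelet set `W`,
`turns` restricts to a bijection `W → [0,1)` and `h̃_W⁻¹ = ξ ∘ δ ∘ (turns|_W)⁻¹`. Since `turns` is
a countable piecewise translation followed by scaling by `1/2π`, it maps both `W₁ \ W₂` and
`W₂ \ W₁` onto `Ω = {x | (turns|_{W₁})⁻¹ x ≠ (turns|_{W₂})⁻¹ x}`, each time dividing the measure
by `2π`. Finally `ω' ⊆ Ω`, and `Ω \ ω'` is countable: over such a point, the preimages `y₁ ≠ y₂`
satisfy `y₂ - y₁ ∈ 2πℤ` and `y₂ ∈ 2^ℤ y₁`, so `y₁ = 2πn / (2^k - 1)`. -/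
open Function

section PiecewiseTranslation

variable {G ι : Type*} [MeasurableSpace G] [AddGroup G] [MeasurableAdd G] {μ : Measure G}
  [μ.IsAddRightInvariant] [Countable ι]

theorem measure_image_eq_of_piecewise_add {f : G → G} {P : ι → Set G} {a : ι → G}
    (hPm : ∀ i, MeasurableSet (P i)) (hPd : Pairwise (Disjoint on P)) (hPcover : ⋃ i, P i = univ)
    (hf : ∀ i, EqOn f (· + a i) (P i)) {S : Set G} (hS : MeasurableSet S) (hinj : InjOn f S) :
    μ (f '' S) = μ S := by
  have hpiece (i : ι) : f '' (S ∩ P i) = (· + -a i) ⁻¹' (S ∩ P i) := by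
    rw [((hf i).mono inter_subset_right).image_eq, image_add_right]
  have hSm (i : ι) : MeasurableSet (S ∩ P i) := hS.inter (hPm i)
  have hS_eq : ⋃ i, S ∩ P i = S := by rw [← inter_iUnion, hPcover, inter_univ]
  have himage_disj : Pairwise (Disjoint on fun i => f '' (S ∩ P i)) := fun i j hij =>
    disjoint_image_image fun b hb c hc hbc => (hPd hij).ne_of_mem hb.2 hc.2 (hinj hb.1 hc.1 hbc)
  calc μ (f '' S) = μ (⋃ i, f '' (S ∩ P i)) := by rw [← image_iUnion, hS_eq]
    _ = ∑' i, μ (S ∩ P i) := by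
      rw [measure_iUnion himage_disj fun i => by
        rw [hpiece]; exact (hSm i).preimage (measurable_add_const _)]
      simp_rw [hpiece, measure_preimage_add_right]
    _ = μ S := by
      rw [← measure_iUnion (fun i j hij => (hPd hij).mono inter_subset_right inter_subset_right)
        hSm, hS_eq]

end PiecewiseTranslation

theorem measure_image_fract {μ : Measure ℝ} [μ.IsAddRightInvariant] {S : Set ℝ}
    (hS : MeasurableSet S) (hinj : InjOn Int.fract S) : μ (Int.fract '' S) = μ S :=
  measure_image_eq_of_piecewise_add (f := Int.fract)
    (P := fun n : ℤ => (Int.floor : ℝ → ℤ) ⁻¹' {n}) (a := fun n => -(n : ℝ))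
    (fun _ => Int.measurable_floor (measurableSet_singleton _))
    (fun _ _ hij => (disjoint_singleton.2 hij).preimage _)
    (by rw [← preimage_iUnion, iUnion_of_singleton, preimage_univ])
    (fun n x hx => by
      rw [mem_preimage, mem_singleton_iff] at hx
      simp [Int.fract, hx, sub_eq_add_neg])
    hS hinj

theorem Set.BijOn.image_diff_eq_setOf_invFunOn_ne {α β : Type*} [Nonempty α] {f : α → β}
    {s s' : Set α} {t : Set β} (h : BijOn f s t) (h' : BijOn f s' t) :
    f '' (s \ s') = {y ∈ t | invFunOn f s y ≠ invFunOn f s' y} := by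
  ext y
  constructor
  · rintro ⟨x, ⟨hxs, hxs'⟩, rfl⟩
    refine ⟨h.mapsTo hxs, fun heq => hxs' ?_⟩
    rw [← h.injOn.leftInvOn_invFunOn hxs, heq]
    exact h'.surjOn.mapsTo_invFunOn (h.mapsTo hxs)
  · rintro ⟨hyt, hne⟩
    refine ⟨invFunOn f s y, ⟨h.surjOn.mapsTo_invFunOn hyt, fun hmem => hne ?_⟩,
      h.surjOn.rightInvOn_invFunOn hyt⟩
    conv_rhs => rw [← h.surjOn.rightInvOn_invFunOn hyt]
    exact (h'.injOn.leftInvOn_invFunOn hmem).symm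

def turns (x : ℝ) : ℝ := Int.fract (x / (2 * π))

lemma turns_mem_Ico (x : ℝ) : turns x ∈ Ico (0 : ℝ) 1 :=
  ⟨Int.fract_nonneg _, Int.fract_lt_one _⟩

lemma turns_eq_turns_iff {x y : ℝ} : turns x = turns y ↔ ∃ n : ℤ, x = y + 2 * π * n := by
  rw [turns, turns, Int.fract_eq_fract]
  refine exists_congr fun n => ?_
  rw [← sub_div, div_eq_iff two_pi_pos.ne', sub_eq_iff_eq_add']
  ring_nf

lemma volume_image_turns {S : Set ℝ} (hS : MeasurableSet S) (hinj : InjOn turns S) :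
    volume (turns '' S) = ENNReal.ofReal (2 * π)⁻¹ * volume S := by
  have hturns : turns = Int.fract ∘ fun x => (2 * π)⁻¹ • x := by
    funext x; simp [turns, div_eq_inv_mul]
  rw [hturns] at hinj ⊢
  rw [image_comp, image_smul, measure_image_fract (hS.const_smul₀ _)
    (by rw [← image_smul]; exact hinj.image_of_comp),
    Measure.addHaar_smul_of_nonneg _ (by positivity), Module.finrank_self, pow_one]

lemma zero_notMem_E : (0 : ℝ) ∉ E := by
  rintro (⟨h₁, h₂⟩ | ⟨h₁, h₂⟩) <;> linarith [pi_pos]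

lemma invOn_xiMap_xiInv : InvOn xiMap xiInv (Ico (0 : ℝ) 1) E := by
  have hπ := pi_pos
  constructor
  · intro t ⟨ht0, ht1⟩
    by_cases h : t < 1 / 2
    · rw [xiInv, if_pos h, xiMap, if_pos (by nlinarith)]
      field_simp
      ring
    · rw [xiInv, if_neg h, xiMap, if_neg (by nlinarith)]
      field_simp
  · rintro e (⟨he₁, he₂⟩ | ⟨he₁, he₂⟩)
    · have hlt : e / (2 * π) + 1 < 1 / 2 := by
        rw [← lt_sub_iff_add_lt, div_lt_iff₀ two_pi_pos]; linarith
      rw [xiMap, if_pos (by linarith), xiInv, if_pos hlt]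
      field_simp
      ring
    · have hge : ¬ e / (2 * π) < 1 / 2 := by
        rw [not_lt, le_div_iff₀ two_pi_pos]; linarith
      rw [xiMap, if_neg (by linarith), xiInv, if_neg hge]
      field_simp

lemma xiInv_mem_E {t : ℝ} (ht : t ∈ Ico (0 : ℝ) 1) : xiInv t ∈ E := by
  have hπ := pi_pos
  unfold xiInv
  split_ifs with h
  · exact Or.inl ⟨by nlinarith [ht.1], by nlinarith⟩
  · exact Or.inr ⟨by nlinarith, by nlinarith [ht.2]⟩

lemma xiMap_mem_Ico {e : ℝ} (he : e ∈ E) : xiMap e ∈ Ico (0 : ℝ) 1 := by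
  have hπ := pi_pos
  rcases he with ⟨he₁, he₂⟩ | ⟨he₁, he₂⟩
  · rw [xiMap, if_pos (by linarith)]
    constructor
    · rw [← neg_le_iff_add_nonneg, le_div_iff₀ two_pi_pos]; linarith
    · rw [← lt_sub_iff_add_lt, div_lt_iff₀ two_pi_pos]; linarith
  · rw [xiMap, if_neg (by linarith)]
    exact ⟨div_nonneg (by linarith) two_pi_pos.le, by rw [div_lt_one two_pi_pos]; exact he₂⟩

lemma tau_eq_xiInv_turns (x : ℝ) : tau x = xiInv (turns x) := by
  have hrem : x - 2 * π * ⌊x / (2 * π)⌋ = 2 * π * turns x := by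
    rw [turns, Int.fract, mul_sub, mul_div_cancel₀ _ two_pi_pos.ne']
  have hcond : 2 * π * turns x < π ↔ turns x < 1 / 2 := by
    constructor <;> intro h <;> nlinarith [pi_pos]
  unfold tau xiInv
  rw [hrem]
  by_cases h : turns x < 1 / 2
  · rw [if_pos (hcond.2 h), if_pos h]; ring
  · rw [if_neg (mt hcond.1 h), if_neg h]

lemma xiMap_tau (x : ℝ) : xiMap (tau x) = turns x := by
  rw [tau_eq_xiInv_turns]
  exact invOn_xiMap_xiInv.1 (turns_mem_Ico x)

lemma two_pow_mul_notMem_E {e : ℝ} (he : e ∈ E) {n : ℕ} (hn : n ≠ 0) : (2 : ℝ) ^ n * e ∉ E := by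
  have hπ := pi_pos
  have h2 : (2 : ℝ) ≤ 2 ^ n := le_self_pow₀ one_le_two hn
  rcases he with ⟨he₁, he₂⟩ | ⟨he₁, he₂⟩ <;> rintro (⟨h₁, h₂⟩ | ⟨h₁, h₂⟩) <;> nlinarith

lemma eq_zero_of_mem_E_of_two_zpow_mul_mem_E {e : ℝ} {k : ℤ} (he : e ∈ E)
    (hk : (2 : ℝ) ^ k * e ∈ E) : k = 0 := by
  by_contra hk0
  obtain ⟨n, rfl | rfl⟩ := Int.eq_nat_or_neg k
  · rw [zpow_natCast] at hk
    exact two_pow_mul_notMem_E he (by exact_mod_cast hk0) hk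
  · refine two_pow_mul_notMem_E hk (n := n) (by simpa using hk0) ?_
    rwa [zpow_neg, zpow_natCast, ← mul_assoc, mul_inv_cancel₀ (by positivity), one_mul]

lemma exists_delta_eq (x : ℝ) : ∃ k : ℤ, delta x = 2 ^ k * x := by
  unfold delta
  split_ifs <;> exact ⟨_, rfl⟩

lemma delta_mem_E {x : ℝ} (hx : x ≠ 0) : delta x ∈ E := by
  have hπ := pi_pos
  rcases hx.lt_or_gt with hneg | hpos
  · have hr : 0 < 2 * π / -x := div_pos two_pi_pos (neg_pos.2 hneg)
    have hlog : ⌊logb 2 (2 * π / -x)⌋ = Int.log 2 (2 * π / -x) := by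
      simpa using floor_logb_natCast (b := 2) hr.le
    have hle : (2 : ℝ) ^ Int.log 2 (2 * π / -x) ≤ 2 * π / -x := by
      simpa using Int.zpow_log_le_self (b := 2) one_lt_two hr
    have hlt : 2 * π / -x < 2 * 2 ^ Int.log 2 (2 * π / -x) := by
      simpa [zpow_add_one₀, mul_comm] using
        Int.lt_zpow_succ_log_self (b := 2) one_lt_two (2 * π / -x)
    rw [delta, if_neg hneg.not_gt, hlog]
    rw [le_div_iff₀ (neg_pos.2 hneg)] at hle
    rw [div_lt_iff₀ (neg_pos.2 hneg)] at hlt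
    exact Or.inl ⟨by linarith, by linarith⟩
  · have hr : 0 < π / x := div_pos hπ hpos
    have hlog : ⌈logb 2 (π / x)⌉ = Int.clog 2 (π / x) := by
      simpa using ceil_logb_natCast (b := 2) hr.le
    have hle : π / x ≤ (2 : ℝ) ^ Int.clog 2 (π / x) := by
      simpa using Int.self_le_zpow_clog (b := 2) one_lt_two (π / x)
    have hlt : (2 : ℝ) ^ Int.clog 2 (π / x) < 2 * (π / x) := by
      have := Int.zpow_pred_clog_lt_self (b := 2) one_lt_two hr
      rw [Nat.cast_ofNat, zpow_sub_one₀ two_ne_zero] at this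
      linarith
    rw [delta, if_pos hpos, hlog]
    rw [div_le_iff₀ hpos] at hle
    rw [mul_div_assoc', lt_div_iff₀ hpos] at hlt
    exact Or.inr ⟨by linarith, by linarith⟩

lemma mem_range_of_turns_eq_of_delta_eq {y₁ y₂ : ℝ} (hne : y₁ ≠ y₂) (ht : turns y₁ = turns y₂)
    (hd : delta y₁ = delta y₂) : y₁ ∈ range fun p : ℤ × ℤ => 2 * π * p.2 / (2 ^ p.1 - 1) := by
  obtain ⟨n, hn⟩ := turns_eq_turns_iff.1 ht
  obtain ⟨a, ha⟩ := exists_delta_eq y₁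
  obtain ⟨b, hb⟩ := exists_delta_eq y₂
  have hy₂ : y₂ = 2 ^ (a - b) * y₁ := by
    rw [zpow_sub₀ two_ne_zero, div_mul_eq_mul_div, eq_div_iff (by positivity), ← ha, mul_comm,
      ← hb, hd]
  have hden : (2 : ℝ) ^ (a - b) - 1 ≠ 0 := fun h => hne (by rw [hy₂, sub_eq_zero.1 h, one_mul])
  refine ⟨(a - b, -n), ?_⟩
  rw [div_eq_iff hden]
  push_cast
  linear_combination hn + hy₂

section WaveletSet

variable {W : Set ℝ}

lemma TransPartition.bijOn_turns (hT : TransPartition W) : BijOn turns W (Ico 0 1) := by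
  refine ⟨fun w _ => turns_mem_Ico w, fun a ha b hb hab => ?_, fun t ht => ?_⟩
  · obtain ⟨n, rfl⟩ := turns_eq_turns_iff.1 hab
    obtain rfl : n = 0 := by
      by_contra hn
      exact disjoint_left.1 (hT.2 hn) ⟨b, hb, rfl⟩ ⟨b + 2 * π * n, ha, by simp⟩
    simp
  · obtain ⟨k, w, hw, hwt⟩ := mem_iUnion.1 (hT.1.symm ▸ mem_univ (2 * π * t))
    refine ⟨w, hw, ?_⟩
    have hturns : turns (2 * π * t) = t := by
      rw [turns, mul_div_cancel_left₀ _ two_pi_pos.ne', Int.fract_eq_self.2 ht]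
    rw [← hturns, turns_eq_turns_iff]
    exact ⟨-k, by push_cast; linarith [hwt]⟩

lemma TransPartition.volume_eq_two_pi_mul (hT : TransPartition W) {S : Set ℝ}
    (hS : MeasurableSet S) (hSW : S ⊆ W) :
    volume S = ENNReal.ofReal (2 * π) * volume (turns '' S) := by
  rw [volume_image_turns hS (hT.bijOn_turns.injOn.mono hSW), ← mul_assoc,
    ← ENNReal.ofReal_mul two_pi_pos.le, mul_inv_cancel₀ two_pi_pos.ne', ENNReal.ofReal_one,
    one_mul]

lemma DilPartition.zero_notMem (hD : DilPartition W) : (0 : ℝ) ∉ W := fun h0 => by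
  have h : (0 : ℝ) ∈ ⋃ k : ℤ, (fun x : ℝ => (2 : ℝ) ^ k * x) '' W :=
    mem_iUnion.2 ⟨0, 0, h0, by simp⟩
  rw [hD.1] at h
  exact h rfl

lemma DilPartition.bijOn_delta (hD : DilPartition W) : BijOn delta W E := by
  have hne (w : ℝ) (hw : w ∈ W) : w ≠ 0 := ne_of_mem_of_not_mem hw hD.zero_notMem
  refine ⟨fun w hw => delta_mem_E (hne w hw), fun a ha b hb hab => ?_, fun e he => ?_⟩
  · obtain ⟨p, hp⟩ := exists_delta_eq a
    obtain ⟨q, hq⟩ := exists_delta_eq b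
    have hb' : b = 2 ^ (p - q) * a := by
      rw [zpow_sub₀ two_ne_zero, div_mul_eq_mul_div, eq_div_iff (by positivity), ← hp, mul_comm,
        ← hq, hab]
    obtain hpq | hpq := eq_or_ne (p - q) 0
    · rw [hb', hpq, zpow_zero, one_mul]
    · exact (disjoint_left.1 (hD.2 hpq) ⟨a, ha, hb'.symm⟩ ⟨b, hb, by simp⟩).elim
  · have he' : e ∈ ⋃ k : ℤ, (fun x : ℝ => (2 : ℝ) ^ k * x) '' W := by
      rw [hD.1]; exact ne_of_mem_of_not_mem he zero_notMem_E
    obtain ⟨k, w, hw, hwe : (2 : ℝ) ^ k * w = e⟩ := mem_iUnion.1 he'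
    obtain ⟨p, hp⟩ := exists_delta_eq w
    have hdelta := delta_mem_E (hne w hw)
    rw [hp] at hdelta
    have hkp : k - p = 0 := by
      refine eq_zero_of_mem_E_of_two_zpow_mul_mem_E hdelta ?_
      rwa [← mul_assoc, ← zpow_add₀ two_ne_zero, sub_add_cancel, hwe]
    refine ⟨w, hw, ?_⟩
    rw [hp, ← hwe, sub_eq_zero.1 hkp]

lemma invFunOn_hIso (hT : TransPartition W) (hD : DilPartition W) {x : ℝ}
    (hx : x ∈ Ico (0 : ℝ) 1) :
    invFunOn (hIso W) (Ico 0 1) x = xiMap (delta (invFunOn turns W x)) := by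
  have hturns := hT.bijOn_turns
  have hdelta := hD.bijOn_delta
  have hIso_eq : EqOn (hIso W) (turns ∘ invFunOn delta W ∘ xiInv) (Ico 0 1) :=
    fun t _ => xiMap_tau _
  have hinj : InjOn (hIso W) (Ico 0 1) :=
    hIso_eq.injOn_iff.2 <| hturns.injOn.comp
      (hdelta.surjOn.rightInvOn_invFunOn.injOn.comp invOn_xiMap_xiInv.1.injOn
        fun _ => xiInv_mem_E)
      (hdelta.surjOn.mapsTo_invFunOn.comp fun _ => xiInv_mem_E)
  have hy := hturns.surjOn.mapsTo_invFunOn hx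
  have hc := xiMap_mem_Ico (hdelta.mapsTo hy)
  have hIso_c : hIso W (xiMap (delta (invFunOn turns W x))) = x := by
    rw [hIso_eq hc, comp_apply, comp_apply, invOn_xiMap_xiInv.2 (hdelta.mapsTo hy),
      hdelta.injOn.leftInvOn_invFunOn hy, hturns.surjOn.rightInvOn_invFunOn hx]
  have h := hinj.leftInvOn_invFunOn hc
  rwa [hIso_c] at h

end WaveletSet

section TwoWaveletSets

variable {W₁ W₂ : Set ℝ}

lemma setOf_invFunOn_hIso_ne (hT₁ : TransPartition W₁) (hD₁ : DilPartition W₁)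
    (hT₂ : TransPartition W₂) (hD₂ : DilPartition W₂) :
    {x ∈ Ico (0 : ℝ) 1 | invFunOn (hIso W₁) (Ico 0 1) x ≠ invFunOn (hIso W₂) (Ico 0 1) x} =
      {x ∈ Ico (0 : ℝ) 1 | delta (invFunOn turns W₁ x) ≠ delta (invFunOn turns W₂ x)} := by
  refine sep_ext_iff.2 fun x hx => ?_
  rw [invFunOn_hIso hT₁ hD₁ hx, invFunOn_hIso hT₂ hD₂ hx]
  exact invOn_xiMap_xiInv.2.injOn.ne_iff
    (hD₁.bijOn_delta.mapsTo (hT₁.bijOn_turns.surjOn.mapsTo_invFunOn hx))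
    (hD₂.bijOn_delta.mapsTo (hT₂.bijOn_turns.surjOn.mapsTo_invFunOn hx))

lemma volume_setOf_delta_invFunOn_ne (hT₁ : TransPartition W₁) (hT₂ : TransPartition W₂) :
    volume {x ∈ Ico (0 : ℝ) 1 | delta (invFunOn turns W₁ x) ≠ delta (invFunOn turns W₂ x)} =
      volume {x ∈ Ico (0 : ℝ) 1 | invFunOn turns W₁ x ≠ invFunOn turns W₂ x} := by
  set N := turns '' range fun p : ℤ × ℤ => 2 * π * p.2 / (2 ^ p.1 - 1)
  have hN : volume N = 0 := ((countable_range _).image _).measure_zero _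
  refine le_antisymm (measure_mono fun x hx => ⟨hx.1, ne_of_apply_ne delta hx.2⟩) ?_
  rw [← measure_sdiff_null hN]
  refine measure_mono fun x ⟨⟨hx, hne⟩, hxN⟩ => ⟨hx, fun hd => hxN ?_⟩
  have h₁ := hT₁.bijOn_turns.surjOn.rightInvOn_invFunOn hx
  have h₂ := hT₂.bijOn_turns.surjOn.rightInvOn_invFunOn hx
  exact ⟨_, mem_range_of_turns_eq_of_delta_eq hne (h₁.trans h₂.symm) hd, h₁⟩

end TwoWaveletSets

/-- For regularized wavelet sets `W₁, W₂` with induced isomorphisms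
`h₁, h₂` and `ω' = {x ∈ [0,1) : h₁⁻¹(x) ≠ h₂⁻¹(x)}`, one has `μ(W₁ △ W₂) = 4π μ(ω')`. -/
theorem volume_symmDiff_eq_four_pi_mul (W₁ W₂ : Set ℝ)
    (h₁ : IsRegularizedWaveletSet W₁) (h₂ : IsRegularizedWaveletSet W₂) :
    volume (W₁ ∆ W₂) =
      ENNReal.ofReal (4*π) *
        volume {x ∈ Ico (0:ℝ) 1 |
          Function.invFunOn (hIso W₁) (Ico (0:ℝ) 1) x ≠
            Function.invFunOn (hIso W₂) (Ico (0:ℝ) 1) x} := by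
  obtain ⟨hm₁, hT₁, hD₁⟩ := h₁
  obtain ⟨hm₂, hT₂, hD₂⟩ := h₂
  have himage₁ : turns '' (W₁ \ W₂) =
      {x ∈ Ico (0 : ℝ) 1 | invFunOn turns W₁ x ≠ invFunOn turns W₂ x} :=
    hT₁.bijOn_turns.image_diff_eq_setOf_invFunOn_ne hT₂.bijOn_turns
  have himage₂ : turns '' (W₂ \ W₁) =
      {x ∈ Ico (0 : ℝ) 1 | invFunOn turns W₁ x ≠ invFunOn turns W₂ x} := by
    simp_rw [hT₂.bijOn_turns.image_diff_eq_setOf_invFunOn_ne hT₁.bijOn_turns, ne_comm]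
  have h4π : ENNReal.ofReal (4 * π) = 2 * ENNReal.ofReal (2 * π) := by
    rw [← ENNReal.ofReal_ofNat 2, ← ENNReal.ofReal_mul zero_le_two]
    ring_nf
  rw [setOf_invFunOn_hIso_ne hT₁ hD₁ hT₂ hD₂, volume_setOf_delta_invFunOn_ne hT₁ hT₂,
    Set.symmDiff_def, measure_union disjoint_sdiff_sdiff (hm₂.diff hm₁),
    hT₁.volume_eq_two_pi_mul (hm₁.diff hm₂) sdiff_subset,
    hT₂.volume_eq_two_pi_mul (hm₂.diff hm₁) sdiff_subset, himage₁, himage₂, h4π]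
  ring

end
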